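/- arXiv:2503.06650 — 5 statements merged into one kernel-verified Lean document; each statement's English description precedes it below -/
import Mathlib

section
/- Let n ≥ 2, let λ_1, …, λ_n be real numbers, let U be an n × n unitary matrix, and set M = U* · Diag(λ_1, …, λ_n) · U. Then the characteristic polynomial of the top-left (n−1) × (n−1) submatrix of M equals Σ_{k=1}^n |U_{k,n}|² · ∏_{1 ≤ j ≤ n, j ≠ k} (z − λ_j) as polynomials in z. -/
/-! The characteristic polynomial of the minor is the `(last, last)` entry of the adjugate of
`z I - M = U* (z I - D) U`. Conjugation by a unitary commutes with taking adjugates, and the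
adjugate of the diagonal matrix `z I - D` is diagonal with `k`-th entry `∏_{j ≠ k} (z - λ_j)`;
reading off the `(last, last)` entry of `U* adj(z I - D) U` gives the weights
`conj U_{k,last} * U_{k,last} = |U_{k,last}|²`. -/

open Polynomial Finset Matrix

namespace Matrix

variable {R : Type*} [CommRing R]

theorem charmatrix_submatrix {m n : Type*} [Fintype m] [DecidableEq m] [Fintype n] [DecidableEq n]
    (A : Matrix n n R) {f : m → n} (hf : Function.Injective f) :
    charmatrix (A.submatrix f f) = (charmatrix A).submatrix f f := by
  ext i j : 1
  by_cases h : i = j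
  · simp [h, charmatrix_apply_eq]
  · simp [charmatrix_apply_ne _ _ _ h, charmatrix_apply_ne _ _ _ (hf.ne h)]

theorem charpoly_submatrix_castSucc {m : ℕ} (A : Matrix (Fin (m + 1)) (Fin (m + 1)) R) :
    (A.submatrix Fin.castSucc Fin.castSucc).charpoly
      = adjugate (charmatrix A) (Fin.last m) (Fin.last m) := by
  rw [adjugate_fin_succ_eq_det_submatrix, ← two_mul, pow_mul, neg_one_sq, one_pow, one_mul,
    Fin.succAbove_last, charpoly, charmatrix_submatrix _ (Fin.castSucc_injective m)]

variable {n : Type*} [Fintype n] [DecidableEq n]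

theorem map_mul_map_eq_one {S : Type*} [CommRing S] (f : R →+* S) {P Q : Matrix n n R}
    (hQP : Q * P = 1) : Q.map f * P.map f = 1 := by
  rw [← Matrix.map_mul, hQP, Matrix.map_one _ (map_zero f) (map_one f)]

theorem charmatrix_conj {P Q : Matrix n n R} (hQP : Q * P = 1) (A : Matrix n n R) :
    charmatrix (Q * A * P) = Q.map C * charmatrix A * P.map C := by
  simp only [charmatrix, map_mul, Matrix.mul_sub, Matrix.sub_mul, RingHom.mapMatrix_apply,
    ← smul_one_eq_diagonal, scalar_apply]
  rw [Matrix.mul_smul, Matrix.smul_mul, Matrix.mul_one, map_mul_map_eq_one C hQP]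

theorem adjugate_conj {P Q : Matrix n n R} (hQP : Q * P = 1) (B : Matrix n n R) :
    adjugate (Q * B * P) = Q * adjugate B * P := by
  have hPQ : P * Q = 1 := mul_eq_one_comm.mp hQP
  have hadjP : adjugate P = P.det • Q := by
    rw [← Matrix.mul_one (adjugate P), ← hPQ, ← Matrix.mul_assoc, adjugate_mul, Matrix.smul_mul,
      Matrix.one_mul]
  have hadjQ : adjugate Q = Q.det • P := by
    rw [← Matrix.mul_one (adjugate Q), ← hQP, ← Matrix.mul_assoc, adjugate_mul, Matrix.smul_mul,
      Matrix.one_mul]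
  rw [adjugate_mul_distrib, adjugate_mul_distrib, hadjP, hadjQ, Matrix.mul_smul, Matrix.mul_smul,
    Matrix.smul_mul, smul_smul, ← det_mul, hQP, det_one, one_smul, Matrix.mul_assoc]

theorem adjugate_charmatrix_conj {P Q : Matrix n n R} (hQP : Q * P = 1) (A : Matrix n n R) :
    adjugate (charmatrix (Q * A * P)) = Q.map C * adjugate (charmatrix A) * P.map C := by
  rw [charmatrix_conj hQP, adjugate_conj (map_mul_map_eq_one C hQP)]

end Matrix

/-- Let `n ≥ 2` (here the dimension is `n + 2`), let `λ_1, …, λ_n` be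
real numbers, let `U` be an `n × n` unitary matrix and set
`M = U* · Diag(λ_1, …, λ_n) · U`.  Then the characteristic polynomial of the top-left
`(n-1) × (n-1)` submatrix of `M` equals
`Σ_{k=1}^n |U_{k,n}|² · ∏_{j ≠ k} (z - λ_j)` as polynomials in `z`. -/
theorem charpoly_minor_unitary_conjugate
    (n : ℕ) (lam : Fin (n + 2) → ℝ)
    (U : Matrix (Fin (n + 2)) (Fin (n + 2)) ℂ)
    (hU : U ∈ Matrix.unitaryGroup (Fin (n + 2)) ℂ) :
    ((Uᴴ * Matrix.diagonal (fun i => (lam i : ℂ)) * U).submatrix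
        (Fin.castSucc : Fin (n + 1) → Fin (n + 2))
        (Fin.castSucc : Fin (n + 1) → Fin (n + 2))).charpoly
      = ∑ k : Fin (n + 2),
          C (((‖U k (Fin.last (n + 1))‖ : ℝ) : ℂ) ^ 2) *
            ∏ j ∈ Finset.univ.erase k, (X - C ((lam j : ℂ))) := by
  have hUU : Uᴴ * U = 1 := mem_unitaryGroup_iff'.mp hU
  rw [charpoly_submatrix_castSucc, adjugate_charmatrix_conj hUU, charmatrix_diagonal,
    adjugate_diagonal, mul_apply]
  refine Finset.sum_congr rfl fun k _ => ?_
  rw [mul_diagonal, map_apply, map_apply, conjTranspose_apply, ← Complex.conj_mul', map_mul,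
    Complex.star_def]
  ring
end

section
/- Let p ≥ 2, let λ_1 ≤ λ_2 ≤ … ≤ λ_p be real numbers, and let ρ_1, …, ρ_p be strictly positive reals with Σ_{j=1}^p ρ_j = 1. Then the degree p−1 monic polynomial Q(z) = Σ_{j=1}^p ρ_j ∏_{k ≠ j} (z − λ_k) has all its roots real, and its roots μ_1 ≤ μ_2 ≤ … ≤ μ_{p−1}, counted with multiplicity, interlace the λ_j: for every 1 ≤ j ≤ p−1 one has λ_j ≤ μ_j ≤ λ_{j+1}. In particular all roots of Q lie in the interval [λ_1, λ_p]. -/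
/-!
If the `λ_j` are distinct, then `Q(λ_j) = ρ_j ∏_{k ≠ j} (λ_j - λ_k)`, so `Q` takes values of
opposite signs at consecutive `λ_j`, and the intermediate value theorem gives a root in each of
the `p - 1` gaps `(λ_j, λ_{j+1})`. Since `Q` is monic of degree `p - 1`, these are all its roots.
In general, perturb `λ_k` to `λ_k + ε k`: the roots of the perturbed polynomials stay in a compact
box, and both the factorization and the interlacing are closed conditions, so they pass to a limit
point as `ε → 0`.
-/

open Polynomial Finset Filter Topology

/-- For uniform weights `ρ j = 1 / p` this is `P' / p`, where `P = ∏ k, (X - C (lam k))`. -/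
noncomputable def randomizedDerivative {R ι : Type*} [CommRing R] [Fintype ι] [DecidableEq ι]
    (ρ lam : ι → R) : R[X] :=
  ∑ j, C (ρ j) * ∏ k ∈ univ.erase j, (X - C (lam k))

section CommRing

variable {R ι : Type*} [CommRing R] [Fintype ι] [DecidableEq ι] (ρ lam : ι → R)

theorem eval_randomizedDerivative (x : R) :
    (randomizedDerivative ρ lam).eval x = ∑ j, ρ j * ∏ k ∈ univ.erase j, (x - lam k) := by
  simp [randomizedDerivative, eval_finsetSum, eval_prod]

theorem eval_randomizedDerivative_at_node (j : ι) :
    (randomizedDerivative ρ lam).eval (lam j) = ρ j * ∏ k ∈ univ.erase j, (lam j - lam k) := by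
  rw [eval_randomizedDerivative, sum_eq_single j _ (by simp)]
  intro i _ hij
  rw [prod_eq_zero (mem_erase.2 ⟨Ne.symm hij, mem_univ j⟩) (sub_self _), mul_zero]

variable [Nontrivial R]

theorem natDegree_prod_erase_X_sub_C (j : ι) :
    (∏ k ∈ univ.erase j, (X - C (lam k))).natDegree = Fintype.card ι - 1 := by
  rw [natDegree_finsetProd_X_sub_C_eq_card, card_erase_of_mem (mem_univ j), card_univ]

theorem natDegree_randomizedDerivative_le :
    (randomizedDerivative ρ lam).natDegree ≤ Fintype.card ι - 1 :=
  natDegree_sum_le_of_forall_le _ _ fun j _ =>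
    (natDegree_C_mul_le _ _).trans (natDegree_prod_erase_X_sub_C lam j).le

theorem coeff_randomizedDerivative_card_sub_one :
    (randomizedDerivative ρ lam).coeff (Fintype.card ι - 1) = ∑ j, ρ j := by
  rw [randomizedDerivative, finsetSum_coeff]
  refine sum_congr rfl fun j _ => ?_
  rw [coeff_C_mul, ← natDegree_prod_erase_X_sub_C lam j,
    (monic_prod_X_sub_C lam (univ.erase j)).coeff_natDegree, mul_one]

variable {ρ}

theorem monic_randomizedDerivative (hρ : ∑ j, ρ j = 1) : (randomizedDerivative ρ lam).Monic :=
  monic_of_natDegree_le_of_coeff_eq_one _ (natDegree_randomizedDerivative_le ρ lam)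
    (by rw [coeff_randomizedDerivative_card_sub_one, hρ])

theorem natDegree_randomizedDerivative (hρ : ∑ j, ρ j = 1) :
    (randomizedDerivative ρ lam).natDegree = Fintype.card ι - 1 :=
  natDegree_eq_of_le_of_coeff_ne_zero (natDegree_randomizedDerivative_le ρ lam)
    (by rw [coeff_randomizedDerivative_card_sub_one, hρ]; exact one_ne_zero)

end CommRing

theorem Polynomial.eq_prod_X_sub_C_of_monic {R ι : Type*} [CommRing R] [IsDomain R] [Fintype ι]
    {p : R[X]} (hp : p.Monic) (hdeg : p.natDegree = Fintype.card ι) {μ : ι → R}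
    (hμ : Function.Injective μ) (hroot : ∀ i, p.IsRoot (μ i)) :
    p = ∏ i, (X - C (μ i)) := by
  have hprod := monic_prod_X_sub_C μ univ
  refine eq_of_degree_le_of_eval_index_eq univ hμ.injOn ?_ ?_ ?_ fun i _ => ?_
  · rw [degree_eq_natDegree hp.ne_zero, hdeg]; rfl
  · rw [degree_eq_natDegree hp.ne_zero, degree_eq_natDegree hprod.ne_zero, hdeg]
    simp
  · rw [hp.leadingCoeff, hprod.leadingCoeff]
  · rw [(hroot i).eq_zero, eval_prod, prod_eq_zero (mem_univ i) (by simp)]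

theorem exists_mem_Ioo_eq_zero_of_mul_neg {α : Type*} [ConditionallyCompleteLinearOrder α]
    [TopologicalSpace α] [OrderTopology α] [DenselyOrdered α] {f : α → ℝ} {a b : α} (hab : a ≤ b)
    (hf : ContinuousOn f (Set.Icc a b)) (hfab : f a * f b < 0) :
    ∃ x ∈ Set.Ioo a b, f x = 0 := by
  rcases mul_neg_iff.1 hfab with ⟨ha, hb⟩ | ⟨ha, hb⟩
  · exact intermediate_value_Ioo' hab hf ⟨hb, ha⟩
  · exact intermediate_value_Ioo hab hf ⟨ha, hb⟩

theorem eval_randomizedDerivative_mul_eval_neg_of_covBy {ι : Type*} [Fintype ι] [LinearOrder ι]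
    {ρ lam : ι → ℝ} (hρ : ∀ j, 0 < ρ j) (hlam : StrictMono lam) {a b : ι} (hab : a ⋖ b) :
    (randomizedDerivative ρ lam).eval (lam a) * (randomizedDerivative ρ lam).eval (lam b) < 0 := by
  have hlt : lam a < lam b := hlam hab.lt
  -- No index lies strictly between `a` and `b`, so every other `λ_k` is on the same side of both.
  have hsame : ∀ k ∈ (univ.erase b).erase a, 0 < (lam a - lam k) * (lam b - lam k) := by
    intro k hk
    obtain ⟨hka, hkb⟩ : k ≠ a ∧ k ≠ b := by simpa using hk
    rcases hka.lt_or_gt with hk | hk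
    · exact mul_pos (sub_pos.2 (hlam hk)) (sub_pos.2 ((hlam hk).trans hlt))
    · have hbk : b < k := (hab.ge_of_gt hk).lt_of_ne' hkb
      exact mul_pos_of_neg_of_neg (sub_neg.2 (hlt.trans (hlam hbk))) (sub_neg.2 (hlam hbk))
  rw [eval_randomizedDerivative_at_node, eval_randomizedDerivative_at_node,
    ← mul_prod_erase _ _ (mem_erase.2 ⟨hab.lt.ne', mem_univ b⟩),
    ← mul_prod_erase _ _ (mem_erase.2 ⟨hab.lt.ne, mem_univ a⟩), erase_right_comm]
  have key := mul_pos (mul_pos (hρ a) (hρ b)) (mul_pos (pow_pos (sub_pos.2 hlt) 2) (prod_pos hsame))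
  rw [prod_mul_distrib] at key
  linear_combination key

def Interlaces {α : Type*} [Preorder α] {n : ℕ} (lam : Fin (n + 2) → α) (μ : Fin (n + 1) → α) :
    Prop :=
  ∀ i, lam i.castSucc ≤ μ i ∧ μ i ≤ lam i.succ

namespace Interlaces

variable {α : Type*} [Preorder α] {n : ℕ} {lam : Fin (n + 2) → α} {μ : Fin (n + 1) → α}

theorem monotone (h : Interlaces lam μ) : Monotone μ :=
  Fin.monotone_iff_le_succ.2 fun i =>
    ((h i.castSucc).2.trans_eq (congrArg lam (Fin.succ_castSucc i))).trans (h i.succ).1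

theorem mem_Icc (h : Interlaces lam μ) (hlam : Monotone lam) (i : Fin (n + 1)) :
    μ i ∈ Set.Icc (lam 0) (lam (Fin.last (n + 1))) :=
  ⟨(hlam (Fin.zero_le _)).trans (h i).1, (h i).2.trans (hlam (Fin.le_last _))⟩

end Interlaces

theorem isClosed_setOf_interlaces {α : Type*} [TopologicalSpace α] [Preorder α]
    [OrderClosedTopology α] (n : ℕ) :
    IsClosed {p : (Fin (n + 2) → α) × (Fin (n + 1) → α) | Interlaces p.1 p.2} := by
  simp only [Interlaces, Set.ofPred_forall, Set.ofPred_and]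
  exact isClosed_iInter fun i => (isClosed_le (by fun_prop) (by fun_prop)).inter
    (isClosed_le (by fun_prop) (by fun_prop))

theorem isClosed_setOf_randomizedDerivative_eq_prod {ι κ : Type*} [Fintype ι] [DecidableEq ι]
    [Fintype κ] (ρ : ι → ℝ) :
    IsClosed {p : (ι → ℝ) × (κ → ℝ) | randomizedDerivative ρ p.1 = ∏ i, (X - C (p.2 i))} := by
  have heq : {p : (ι → ℝ) × (κ → ℝ) | randomizedDerivative ρ p.1 = ∏ i, (X - C (p.2 i))} =
      ⋂ x : ℝ, {p | (randomizedDerivative ρ p.1).eval x = (∏ i, (X - C (p.2 i))).eval x} := by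
    ext p
    simp only [Set.mem_ofPred_eq, Set.mem_iInter]
    exact ⟨fun h x => h ▸ rfl, Polynomial.funext⟩
  rw [heq]
  refine isClosed_iInter fun x => isClosed_eq ?_ ?_
  all_goals simp only [eval_randomizedDerivative, eval_prod, eval_sub, eval_X, eval_C]; fun_prop

theorem exists_interlacing_roots_of_strictMono {n : ℕ} {ρ lam : Fin (n + 2) → ℝ}
    (hρ : ∀ j, 0 < ρ j) (hρsum : ∑ j, ρ j = 1) (hlam : StrictMono lam) :
    ∃ μ : Fin (n + 1) → ℝ, randomizedDerivative ρ lam = ∏ i, (X - C (μ i)) ∧ Interlaces lam μ := by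
  have hroot (i : Fin (n + 1)) :
      ∃ x ∈ Set.Ioo (lam i.castSucc) (lam i.succ), (randomizedDerivative ρ lam).IsRoot x := by
    have hcov : i.castSucc ⋖ i.succ :=
      Fin.orderSucc_castSucc i ▸ Order.covBy_succ_of_not_isMax (Fin.castSucc_lt_succ.not_isMax)
    exact exists_mem_Ioo_eq_zero_of_mul_neg (hlam hcov.lt).le (Polynomial.continuousOn _)
      (eval_randomizedDerivative_mul_eval_neg_of_covBy hρ hlam hcov)
  choose μ hμ hμroot using hroot
  have hμmono : StrictMono μ := Fin.strictMono_iff_lt_succ.2 fun i =>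
    (hμ i.castSucc).2.trans_le ((congrArg lam (Fin.succ_castSucc i)).trans_le (hμ i.succ).1.le)
  refine ⟨μ, eq_prod_X_sub_C_of_monic (monic_randomizedDerivative lam hρsum) ?_ hμmono.injective
    hμroot, fun i => ⟨(hμ i).1.le, (hμ i).2.le⟩⟩
  simp [natDegree_randomizedDerivative lam hρsum]

theorem exists_interlacing_roots {n : ℕ} {ρ lam : Fin (n + 2) → ℝ}
    (hρ : ∀ j, 0 < ρ j) (hρsum : ∑ j, ρ j = 1) (hlam : Monotone lam) :
    ∃ μ : Fin (n + 1) → ℝ, randomizedDerivative ρ lam = ∏ i, (X - C (μ i)) ∧ Interlaces lam μ := by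
  set ε : ℕ → ℝ := fun m => 1 / (m + 1)
  set lamε : ℕ → Fin (n + 2) → ℝ := fun m k => lam k + ε m * k
  have hstrict (m : ℕ) : StrictMono (lamε m) := hlam.add_strictMono fun a b hab =>
    mul_lt_mul_of_pos_left (by exact_mod_cast hab) (by positivity)
  choose μ hμ hint using fun m => exists_interlacing_roots_of_strictMono hρ hρsum (hstrict m)
  have hbound (m : ℕ) : μ m ∈ Set.Icc (fun _ => lam 0) (fun _ => lam (Fin.last _) + (n + 1)) := by
    refine ⟨fun i => ?_, fun i => ?_⟩
    · simpa [lamε] using ((hint m).mem_Icc (hstrict m).monotone i).1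
    · have hε : ε m ≤ 1 := div_le_one_of_le₀ (by simp) (by positivity)
      calc μ m i ≤ lam (Fin.last _) + ε m * (n + 1) := by
            simpa [lamε] using ((hint m).mem_Icc (hstrict m).monotone i).2
        _ ≤ lam (Fin.last _) + (n + 1) := by gcongr; exact mul_le_of_le_one_left (by positivity) hε
  obtain ⟨ν, -, φ, hφ, hν⟩ := isCompact_Icc.tendsto_subseq hbound
  have hlamε : Tendsto (fun m => lamε (φ m)) atTop (𝓝 lam) := by
    have hε : Tendsto (ε ∘ φ) atTop (𝓝 0) :=
      tendsto_one_div_add_atTop_nhds_zero_nat.comp hφ.tendsto_atTop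
    refine tendsto_pi_nhds.2 fun k => ?_
    simpa using tendsto_const_nhds.add (hε.mul_const (k : ℝ))
  have hgood : ∀ m, (lamε (φ m), μ (φ m)) ∈
      {p | randomizedDerivative ρ p.1 = ∏ i, (X - C (p.2 i))} ∩ {p | Interlaces p.1 p.2} :=
    fun m => ⟨hμ (φ m), hint (φ m)⟩
  obtain ⟨hQ, hν⟩ := ((isClosed_setOf_randomizedDerivative_eq_prod ρ).inter
    (isClosed_setOf_interlaces n)).mem_of_tendsto (hlamε.prodMk_nhds hν) (.of_forall hgood)
  exact ⟨ν, hQ, hν⟩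

/-- Let `p ≥ 2` (here `p = n + 2`), let `λ_1 ≤ … ≤ λ_p` be real numbers
and let `ρ_1, …, ρ_p > 0` with `Σ ρ_j = 1`.  Then the monic degree `p - 1` polynomial
`Q(z) = Σ_j ρ_j ∏_{k ≠ j} (z - λ_k)` has all its roots real, and its roots
`μ_1 ≤ … ≤ μ_{p-1}` (with multiplicity) interlace the `λ_j`:
`λ_j ≤ μ_j ≤ λ_{j+1}` for all `1 ≤ j ≤ p - 1`; in particular all roots of `Q` lie in
`[λ_1, λ_p]`. -/
theorem randomized_derivative_roots_real_and_interlace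
    (n : ℕ) (lam : Fin (n + 2) → ℝ) (hlam : Monotone lam)
    (ρ : Fin (n + 2) → ℝ) (hρpos : ∀ j, 0 < ρ j) (hρsum : ∑ j, ρ j = 1) :
    ∃ μ : Fin (n + 1) → ℝ, Monotone μ ∧
      (∑ j : Fin (n + 2), C (ρ j) * ∏ k ∈ Finset.univ.erase j, (X - C (lam k)))
        = ∏ i : Fin (n + 1), (X - C (μ i)) ∧
      (∀ j : Fin (n + 1), lam j.castSucc ≤ μ j ∧ μ j ≤ lam j.succ) ∧
      (∀ j : Fin (n + 1), lam 0 ≤ μ j ∧ μ j ≤ lam (Fin.last (n + 1))) := by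
  obtain ⟨μ, hQ, hμ⟩ := exists_interlacing_roots hρpos hρsum hlam
  exact ⟨μ, hμ.monotone, hQ, hμ, hμ.mem_Icc hlam⟩
end

section
/- Let β > 0, A > 0 and δ > 0. There is a constant C depending only on β, A and δ such that the following holds for every integer N ≥ 2 and every 1 ≤ d ≤ N − 1. Let λ_1, …, λ_N ∈ [−A, A], let z > A + 1, and let γ_1, …, γ_N be i.i.d. random variables with the Gamma(β/2, 1) distribution. Then P( (Σ_{j=1}^N Y_j γ_j) / ((β/2) · Σ_{j=1}^N Y_j) ∉ (e^{−δ/2}, e^{δ/2}) ) ≤ C · N^{−3}. -/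
/-!
Exchanging the indices `j` and `k` alters each product in `Y_j` in at most one factor, and
`z - λ_k ≤ (1 + 2A) (z - λ_j)` because `z - A > 1`; hence `Y_j ≤ K Y_k` with `K = 1 + 2A`, and the
weights `w_j = Y_j / Σ Y` satisfy `w_j ≤ K / N`. The ratio is `Σ w_j γ_j / a` with `a = β / 2`.
For `γ ~ Gamma(a, 1)` one has `E exp(sγ) = (1 - s)^(-a) ≤ exp(a (s + 2 s²))` for `s ≤ 1/2`, so
by independence, for weights summing to `1` and bounded by `κ`, a Chernoff bound at
`t = ±η / (4κ)` bounds each tail `Σ w_j γ_j ≷ (1 ± η) a` by `exp(-a η² / (8κ))`. With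
`κ = K / N` this is `exp(-cN) = O(N⁻³)`.
-/

open MeasureTheory ProbabilityTheory Finset

/-- For an index `j` of `{1,…,N}`, `Y_j` is the sum over all injective `d`-tuples
`(j_1, …, j_d)` of pairwise distinct indices in `{1,…,N} \ {j}` of
`∏_{ℓ=1}^d (z - λ_{j_ℓ})`. -/
noncomputable def Yquant (N d : ℕ) (lam : Fin N → ℝ) (z : ℝ) (j : Fin N) : ℝ :=
  ∑ f ∈ Finset.univ.filter (fun f : Fin d ↪ Fin N => ∀ l, f l ≠ j),
    ∏ l : Fin d, (z - lam (f l))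

open Real

lemma Real.neg_log_one_sub_le {s : ℝ} (hs : s ≤ 1 / 2) : -log (1 - s) ≤ s + 2 * s ^ 2 := by
  have h1 : 0 < 1 - s := by linarith
  have hlog := one_sub_inv_le_log_of_pos h1
  have hinv : (1 - s)⁻¹ ≤ 1 + s + 2 * s ^ 2 := by
    rw [inv_le_iff_one_le_mul₀ h1]
    nlinarith [sq_nonneg s]
  linarith

lemma Real.one_sub_rpow_neg_le_exp {a s : ℝ} (ha : 0 ≤ a) (hs : s ≤ 1 / 2) :
    (1 - s) ^ (-a) ≤ exp (a * (s + 2 * s ^ 2)) := by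
  rw [rpow_def_of_pos (by linarith), exp_le_exp]
  nlinarith [Real.neg_log_one_sub_le hs]

lemma Real.exp_neg_le_six_div_pow_three {x : ℝ} (hx : 0 < x) : exp (-x) ≤ 6 / x ^ 3 := by
  have h := pow_div_factorial_le_exp x hx.le 3
  rw [exp_neg, ← one_div, div_le_div_iff₀ (exp_pos x) (by positivity)]
  norm_num [Nat.factorial] at h
  linarith

lemma Real.two_sub_exp_neg_le_exp (x : ℝ) : 2 - exp (-x) ≤ exp x := by
  have := one_le_cosh x
  rw [cosh_eq] at this
  linarith

lemma sub_le_one_add_two_mul_sub {A x y z : ℝ} (hx : x ∈ Set.Icc (-A) A)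
    (hy : y ∈ Set.Icc (-A) A) (hz : A + 1 < z) : z - x ≤ (1 + 2 * A) * (z - y) := by
  obtain ⟨hx₁, hx₂⟩ := hx
  obtain ⟨hy₁, hy₂⟩ := hy
  nlinarith

lemma prod_le_mul_prod_swap {α ι : Type*} [DecidableEq α] [Fintype ι] {u : α → ℝ}
    (hu : ∀ i, 0 ≤ u i) {K : ℝ} (hK : 1 ≤ K) {j k : α} (hjk : u k ≤ K * u j) (f : ι ↪ α) (hf : ∀ l, f l ≠ j) :
    ∏ l, u (f l) ≤ K * ∏ l, u (Equiv.swap j k (f l)) := by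
  classical
  by_cases hk : ∃ l₀, f l₀ = k
  · obtain ⟨l₀, hl₀⟩ := hk
    have hfix : ∀ l ∈ univ.erase l₀, u (Equiv.swap j k (f l)) = u (f l) := fun l hl ↦ by
      rw [Equiv.swap_apply_of_ne_of_ne (hf l) (hl₀ ▸ f.injective.ne (ne_of_mem_erase hl))]
    rw [← mul_prod_erase _ _ (mem_univ l₀), ← mul_prod_erase _ _ (mem_univ l₀),
      prod_congr rfl hfix, hl₀, Equiv.swap_apply_right, ← mul_assoc]
    exact mul_le_mul_of_nonneg_right hjk (prod_nonneg fun _ _ ↦ hu _)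
  · push Not at hk
    simp only [Equiv.swap_apply_of_ne_of_ne (hf _) (hk _)]
    exact le_mul_of_one_le_left (prod_nonneg fun _ _ ↦ hu _) hK

lemma card_mul_le_mul_sum {ι : Type*} [Fintype ι] {f : ι → ℝ} {K : ℝ}
    (h : ∀ j k, f j ≤ K * f k) (j : ι) : Fintype.card ι * f j ≤ K * ∑ k, f k := by
  calc Fintype.card ι * f j = ∑ _k : ι, f j := by simp
    _ ≤ ∑ k, K * f k := sum_le_sum fun k _ ↦ h j k
    _ = K * ∑ k, f k := (mul_sum _ _ _).symm

namespace ProbabilityTheory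

variable {a s : ℝ}

lemma gammaPDF_one_mul_exp (hs : s < 1) (x : ℝ) :
    gammaPDF a 1 x * ENNReal.ofReal (exp (s * x)) =
      ENNReal.ofReal ((1 - s) ^ (-a)) * gammaPDF a (1 - s) x := by
  have h1 : 0 < 1 - s := by linarith
  rcases lt_or_ge x 0 with hx | hx
  · simp [gammaPDF_of_neg hx]
  rw [gammaPDF_of_nonneg hx, gammaPDF_of_nonneg hx, ← ENNReal.ofReal_mul' (exp_nonneg _),
    ← ENNReal.ofReal_mul (rpow_nonneg h1.le _)]
  congr 1
  have hcancel : (1 - s) ^ (-a) * (1 - s) ^ a = 1 := by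
    rw [← rpow_add h1, neg_add_cancel, rpow_zero]
  calc 1 ^ a / Gamma a * x ^ (a - 1) * exp (-(1 * x)) * exp (s * x)
      = ((1 - s) ^ (-a) * (1 - s) ^ a) / Gamma a * x ^ (a - 1) * exp (-((1 - s) * x)) := by
        rw [hcancel, one_rpow, mul_assoc _ (exp _), ← exp_add]; ring_nf
    _ = _ := by ring

lemma lintegral_exp_mul_gammaMeasure (ha : 0 < a) (hs : s < 1) :
    ∫⁻ x, ENNReal.ofReal (exp (s * x)) ∂gammaMeasure a 1 = ENNReal.ofReal ((1 - s) ^ (-a)) := by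
  have hpdf (r : ℝ) : Measurable (gammaPDF a r) := (measurable_gammaPDFReal a r).ennreal_ofReal
  rw [gammaMeasure, lintegral_withDensity_eq_lintegral_mul _ (hpdf 1) (by fun_prop)]
  simp_rw [Pi.mul_apply, gammaPDF_one_mul_exp hs]
  rw [lintegral_const_mul _ (hpdf _),
    lintegral_gammaPDF_eq_one ha (by linarith), mul_one]

lemma integrable_exp_mul_gammaMeasure (ha : 0 < a) (hs : s < 1) :
    Integrable (fun x ↦ exp (s * x)) (gammaMeasure a 1) := by
  refine ⟨by fun_prop, ?_⟩
  simp_rw [HasFiniteIntegral, enorm_eq_ofReal (exp_nonneg _),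
    lintegral_exp_mul_gammaMeasure ha hs]
  exact ENNReal.ofReal_lt_top

lemma mgf_id_gammaMeasure (ha : 0 < a) (hs : s < 1) :
    mgf id (gammaMeasure a 1) s = (1 - s) ^ (-a) := by
  rw [mgf, integral_eq_lintegral_of_nonneg_ae (ae_of_all _ fun x ↦ exp_nonneg _) (by fun_prop)]
  simp only [id, lintegral_exp_mul_gammaMeasure ha hs]
  exact ENNReal.toReal_ofReal (rpow_nonneg (by linarith) _)

variable {Ω : Type*} [MeasurableSpace Ω] {P : Measure Ω} {X : Ω → ℝ}

lemma integrable_exp_mul_of_map_eq_gammaMeasure (ha : 0 < a) (hX : AEMeasurable X P)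
    (hmap : P.map X = gammaMeasure a 1) (hs : s < 1) :
    Integrable (fun ω ↦ exp (s * X ω)) P := by
  have h := integrable_exp_mul_gammaMeasure ha hs
  rw [← hmap, integrable_map_measure (by fun_prop) hX] at h
  exact h

lemma mgf_le_of_map_eq_gammaMeasure (ha : 0 < a) (hX : AEMeasurable X P)
    (hmap : P.map X = gammaMeasure a 1) (hs : s ≤ 1 / 2) :
    mgf X P s ≤ exp (a * (s + 2 * s ^ 2)) := by
  rw [← mgf_id_map hX, hmap, mgf_id_gammaMeasure ha (by linarith)]
  exact Real.one_sub_rpow_neg_le_exp ha.le hs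

variable {ι : Type*} [Fintype ι] {γ : ι → Ω → ℝ} {w : ι → ℝ} {t κ η : ℝ}

lemma mgf_sum_mul_le_exp_sum (ha : 0 < a) (hmeas : ∀ j, Measurable (γ j))
    (hindep : iIndepFun γ P) (hmap : ∀ j, P.map (γ j) = gammaMeasure a 1)
    (ht : ∀ j, t * w j ≤ 1 / 2) :
    Integrable (fun ω ↦ exp (t * ∑ j, w j * γ j ω)) P ∧
      mgf (fun ω ↦ ∑ j, w j * γ j ω) P t ≤ exp (a * ∑ j, (t * w j + 2 * (t * w j) ^ 2)) := by
  have hmeas' : ∀ j, Measurable (fun ω ↦ w j * γ j ω) := fun j ↦ (hmeas j).const_mul _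
  have hindep' : iIndepFun (fun j ω ↦ w j * γ j ω) P :=
    hindep.comp (fun j x ↦ w j * x) fun j ↦ measurable_const_mul _
  have hX : (fun ω ↦ ∑ j, w j * γ j ω) = ∑ j, fun ω ↦ w j * γ j ω := by
    ext ω; simp
  have hint (j : ι) : Integrable (fun ω ↦ exp (t * (w j * γ j ω))) P := by
    simpa only [mul_assoc] using integrable_exp_mul_of_map_eq_gammaMeasure ha
      (hmeas j).aemeasurable (hmap j) (s := t * w j) (by linarith [ht j])
  have hmgf (j : ι) : mgf (fun ω ↦ w j * γ j ω) P t = mgf (γ j) P (t * w j) := by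
    simp only [mgf, mul_assoc]
  have := hindep.isProbabilityMeasure
  refine ⟨?_, ?_⟩
  · simpa [hX] using hindep'.integrable_exp_mul_sum hmeas' (s := univ) fun j _ ↦ hint j
  rw [hX, hindep'.mgf_sum hmeas', mul_sum, exp_sum]
  refine prod_le_prod (fun _ _ ↦ mgf_nonneg) fun j _ ↦ ?_
  rw [hmgf]
  exact mgf_le_of_map_eq_gammaMeasure ha (hmeas j).aemeasurable (hmap j) (ht j)

lemma mgf_sum_mul_le_exp_of_sum_eq_one (ha : 0 < a) (hmeas : ∀ j, Measurable (γ j))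
    (hindep : iIndepFun γ P) (hmap : ∀ j, P.map (γ j) = gammaMeasure a 1)
    (hw0 : ∀ j, 0 ≤ w j) (hw1 : ∑ j, w j = 1) (hwκ : ∀ j, w j ≤ κ) (htκ : t * κ ≤ 1 / 2) :
    Integrable (fun ω ↦ exp (t * ∑ j, w j * γ j ω)) P ∧
      mgf (fun ω ↦ ∑ j, w j * γ j ω) P t ≤ exp (a * (t + 2 * t ^ 2 * κ)) := by
  have ht (j : ι) : t * w j ≤ 1 / 2 := by
    rcases le_total 0 t with h | h
    · nlinarith [mul_le_mul_of_nonneg_left (hwκ j) h]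
    · nlinarith [hw0 j]
  have hsq : ∑ j, w j ^ 2 ≤ κ := by
    calc ∑ j, w j ^ 2 ≤ ∑ j, κ * w j := sum_le_sum fun j _ ↦ by nlinarith [hw0 j, hwκ j]
      _ = κ := by rw [← mul_sum, hw1, mul_one]
  have hexponent : ∑ j, (t * w j + 2 * (t * w j) ^ 2) ≤ t + 2 * t ^ 2 * κ := by
    have : ∑ j, (t * w j + 2 * (t * w j) ^ 2) = t * ∑ j, w j + 2 * t ^ 2 * ∑ j, w j ^ 2 := by
      simp only [sum_add_distrib, mul_sum]; ring_nf
    rw [this, hw1]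
    nlinarith [sq_nonneg t]
  obtain ⟨hint, hmgf⟩ := mgf_sum_mul_le_exp_sum ha hmeas hindep hmap ht
  exact ⟨hint, hmgf.trans (exp_le_exp.mpr (mul_le_mul_of_nonneg_left hexponent ha.le))⟩

lemma measureReal_sum_mul_ge_le_exp [IsProbabilityMeasure P] (ha : 0 < a)
    (hmeas : ∀ j, Measurable (γ j)) (hindep : iIndepFun γ P)
    (hmap : ∀ j, P.map (γ j) = gammaMeasure a 1) (hw0 : ∀ j, 0 ≤ w j) (hw1 : ∑ j, w j = 1)
    (hwκ : ∀ j, w j ≤ κ) (hκ : 0 < κ) (hη0 : 0 ≤ η) (hη2 : η ≤ 2) :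
    P.real {ω | (1 + η) * a ≤ ∑ j, w j * γ j ω} ≤ exp (-(a * η ^ 2 / (8 * κ))) := by
  have htκ : η / (4 * κ) * κ ≤ 1 / 2 := by
    rw [div_mul_eq_mul_div, mul_div_mul_right _ _ hκ.ne']; linarith
  obtain ⟨hint, hmgf⟩ :=
    mgf_sum_mul_le_exp_of_sum_eq_one ha hmeas hindep hmap hw0 hw1 hwκ htκ
  calc P.real {ω | (1 + η) * a ≤ ∑ j, w j * γ j ω}
      ≤ exp (-(η / (4 * κ)) * ((1 + η) * a)) *
          exp (a * (η / (4 * κ) + 2 * (η / (4 * κ)) ^ 2 * κ)) :=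
        (measure_ge_le_exp_mul_mgf _ (by positivity) hint).trans (by gcongr)
    _ = exp (-(a * η ^ 2 / (8 * κ))) := by
        rw [← exp_add]; congr 1; field_simp; ring

lemma measureReal_sum_mul_le_le_exp [IsProbabilityMeasure P] (ha : 0 < a)
    (hmeas : ∀ j, Measurable (γ j)) (hindep : iIndepFun γ P)
    (hmap : ∀ j, P.map (γ j) = gammaMeasure a 1) (hw0 : ∀ j, 0 ≤ w j) (hw1 : ∑ j, w j = 1)
    (hwκ : ∀ j, w j ≤ κ) (hκ : 0 < κ) (hη0 : 0 ≤ η) :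
    P.real {ω | ∑ j, w j * γ j ω ≤ (1 - η) * a} ≤ exp (-(a * η ^ 2 / (8 * κ))) := by
  have htκ : -(η / (4 * κ)) * κ ≤ 1 / 2 := by
    rw [neg_mul, div_mul_eq_mul_div, mul_div_mul_right _ _ hκ.ne']; linarith
  obtain ⟨hint, hmgf⟩ :=
    mgf_sum_mul_le_exp_of_sum_eq_one ha hmeas hindep hmap hw0 hw1 hwκ htκ
  calc P.real {ω | ∑ j, w j * γ j ω ≤ (1 - η) * a}
      ≤ exp (-(-(η / (4 * κ))) * ((1 - η) * a)) *
          exp (a * (-(η / (4 * κ)) + 2 * (-(η / (4 * κ))) ^ 2 * κ)) :=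
        (measure_le_le_exp_mul_mgf _ (by simp only [Left.neg_nonpos_iff]; positivity) hint).trans
          (by gcongr)
    _ = exp (-(a * η ^ 2 / (8 * κ))) := by
        rw [← exp_add]; congr 1; field_simp; ring

lemma measureReal_sum_mul_div_notMem_Ioo_le [IsProbabilityMeasure P] (ha : 0 < a)
    (hmeas : ∀ j, Measurable (γ j)) (hindep : iIndepFun γ P)
    (hmap : ∀ j, P.map (γ j) = gammaMeasure a 1) (hw0 : ∀ j, 0 ≤ w j) (hw1 : ∑ j, w j = 1)
    (hwκ : ∀ j, w j ≤ κ) (hκ : 0 < κ) (hη0 : 0 ≤ η) (hη2 : η ≤ 2) :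
    P.real {ω | (∑ j, w j * γ j ω) / a ∉ Set.Ioo (1 - η) (1 + η)} ≤
      2 * exp (-(a * η ^ 2 / (8 * κ))) := by
  have hsub : {ω | (∑ j, w j * γ j ω) / a ∉ Set.Ioo (1 - η) (1 + η)} ⊆
      {ω | ∑ j, w j * γ j ω ≤ (1 - η) * a} ∪ {ω | (1 + η) * a ≤ ∑ j, w j * γ j ω} := by
    intro ω hω
    simp only [Set.mem_ofPred_eq, Set.mem_Ioo, not_and_or, not_lt, div_le_iff₀ ha,
      le_div_iff₀ ha] at hω
    exact hω
  calc _ ≤ _ := measureReal_mono hsub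
    _ ≤ _ := measureReal_union_le _ _
    _ ≤ _ := by
      rw [two_mul]
      gcongr
      · exact measureReal_sum_mul_le_le_exp ha hmeas hindep hmap hw0 hw1 hwκ hκ hη0
      · exact measureReal_sum_mul_ge_le_exp ha hmeas hindep hmap hw0 hw1 hwκ hκ hη0 hη2

end ProbabilityTheory

section Yquant

variable {N d : ℕ} {lam : Fin N → ℝ} {z : ℝ}

lemma Yquant_comp_perm (σ : Equiv.Perm (Fin N)) (j : Fin N) :
    Yquant N d (lam ∘ σ) z j = Yquant N d lam z (σ j) := by
  refine sum_equiv (Equiv.embeddingCongr (Equiv.refl _) σ) (fun f ↦ ?_) fun f _ ↦ rfl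
  simp

lemma Yquant_pos (hd : d ≤ N - 1) (hpos : ∀ i, 0 < z - lam i) (j : Fin N) :
    0 < Yquant N d lam z j := by
  refine sum_pos (fun f _ ↦ prod_pos fun l _ ↦ hpos _) ?_
  have hcard : Fintype.card (Fin d) ≤ Fintype.card {i : Fin N // i ≠ j} := by
    simpa [Fintype.card_subtype_compl] using hd
  obtain ⟨e⟩ := Function.Embedding.nonempty_of_card_le hcard
  exact ⟨e.trans (Function.Embedding.subtype _), mem_filter.mpr ⟨mem_univ _, fun l ↦ (e l).2⟩⟩

lemma Yquant_le_mul_Yquant {K : ℝ} (hpos : ∀ i, 0 < z - lam i)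
    (hratio : ∀ i i', z - lam i ≤ K * (z - lam i')) (j k : Fin N) :
    Yquant N d lam z j ≤ K * Yquant N d lam z k := by
  have hK : 1 ≤ K := le_of_mul_le_mul_right (by simpa using hratio j j) (hpos j)
  calc Yquant N d lam z j
      ≤ ∑ f ∈ univ.filter (fun f : Fin d ↪ Fin N ↦ ∀ l, f l ≠ j),
          K * ∏ l, (z - lam (Equiv.swap j k (f l))) :=
        sum_le_sum fun f hf ↦ prod_le_mul_prod_swap (u := fun i ↦ z - lam i)
          (fun i ↦ (hpos i).le) hK (hratio k j) f (mem_filter.mp hf).2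
    _ = K * Yquant N d (lam ∘ Equiv.swap j k) z j := by rw [Yquant, mul_sum]; rfl
    _ = K * Yquant N d lam z k := by rw [Yquant_comp_perm, Equiv.swap_apply_left]

lemma Yquant_div_sum_le {A : ℝ} (hd : d ≤ N - 1) (hlam : ∀ i, lam i ∈ Set.Icc (-A) A)
    (hz : A + 1 < z) (j : Fin N) :
    Yquant N d lam z j / ∑ k, Yquant N d lam z k ≤ (1 + 2 * A) / N := by
  have hpos (i : Fin N) : 0 < z - lam i := by linarith [(hlam i).2]
  have hT : 0 < ∑ k, Yquant N d lam z k := sum_pos (fun k _ ↦ Yquant_pos hd hpos k) ⟨j, mem_univ _⟩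
  rw [div_le_div_iff₀ hT (by simpa using j.pos), mul_comm]
  simpa using card_mul_le_mul_sum (Yquant_le_mul_Yquant hpos
    fun i i' ↦ sub_le_one_add_two_mul_sub (hlam i) (hlam i') hz) j

end Yquant

theorem gamma_weighted_Y_ratio_concentration_general
    (β A δ : ℝ) (hβ : 0 < β) (hδ : 0 < δ) :
    ∃ C : ℝ,
      ∀ (N d : ℕ), 2 ≤ N → 1 ≤ d → d ≤ N - 1 →
      ∀ (lam : Fin N → ℝ), (∀ j, lam j ∈ Set.Icc (-A) A) →
      ∀ (z : ℝ), A + 1 < z →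
      ∀ (Ω : Type) (_ : MeasurableSpace Ω) (P : Measure Ω), IsProbabilityMeasure P →
      ∀ (γ : Fin N → Ω → ℝ),
        (∀ j, Measurable (γ j)) →
        iIndepFun γ P →
        (∀ j, Measure.map (γ j) P = gammaMeasure (β / 2) 1) →
        (P {ω | (∑ j, Yquant N d lam z j * γ j ω) / ((β / 2) * ∑ j, Yquant N d lam z j) ∉
            Set.Ioo (Real.exp (-δ / 2)) (Real.exp (δ / 2))}).toReal
          ≤ C * ((N : ℝ) ^ 3)⁻¹ := by
  set K := 1 + 2 * A
  set η := 1 - exp (-δ / 2)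
  set ε := β / 2 * η ^ 2 / (8 * K) with hε
  refine ⟨2 * 6 / ε ^ 3, fun N d hN _ hd lam hlam z hz Ω _ P _ γ hmeas hindep hmap ↦ ?_⟩
  have hK : 0 < K := by linarith [(hlam ⟨0, by omega⟩).1, (hlam ⟨0, by omega⟩).2]
  have hη : 0 < η ∧ η ≤ 2 := by
    constructor <;> linarith [exp_lt_one_iff.mpr (by linarith : -δ / 2 < 0), exp_pos (-δ / 2)]
  have hε_pos : 0 < ε := by have := hη.1; positivity
  have hY := Yquant_pos hd fun i ↦ show 0 < z - lam i by linarith [(hlam i).2]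
  set T := ∑ j, Yquant N d lam z j
  have hT : 0 < T := sum_pos (fun j _ ↦ hY j) ⟨⟨0, by omega⟩, mem_univ _⟩
  have hsub : {ω | (∑ j, Yquant N d lam z j * γ j ω) / (β / 2 * T) ∉
        Set.Ioo (exp (-δ / 2)) (exp (δ / 2))} ⊆
      {ω | (∑ j, Yquant N d lam z j / T * γ j ω) / (β / 2) ∉ Set.Ioo (1 - η) (1 + η)} := by
    intro ω hω hmem
    simp_rw [div_mul_eq_mul_div, ← sum_div, div_div, mul_comm T] at hmem
    refine hω (Set.Ioo_subset_Ioo (by simp [η]) ?_ hmem)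
    have := Real.two_sub_exp_neg_le_exp (δ / 2)
    rw [← neg_div] at this
    linarith
  calc P.real _ ≤ _ := measureReal_mono hsub
    _ ≤ 2 * exp (-(β / 2 * η ^ 2 / (8 * (K / N)))) :=
      measureReal_sum_mul_div_notMem_Ioo_le (by positivity) hmeas hindep hmap
        (fun j ↦ (div_pos (hY j) hT).le) (by rw [← sum_div, div_self hT.ne'])
        (Yquant_div_sum_le hd hlam hz) (by positivity) hη.1.le hη.2
    _ = 2 * exp (-(ε * N)) := by rw [hε]; field_simp
    _ ≤ 2 * (6 / (ε * N) ^ 3) := by gcongr; exact Real.exp_neg_le_six_div_pow_three (by positivity)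
    _ = 2 * 6 / ε ^ 3 * ((N : ℝ) ^ 3)⁻¹ := by field_simp

/-- Let `β > 0`, `A > 0` and `δ > 0`.  There is a constant `C`
depending only on `β`, `A` and `δ` such that for every `N ≥ 2`, `1 ≤ d ≤ N - 1`,
`λ_1, …, λ_N ∈ [-A, A]`, `z > A + 1`, and `γ_1, …, γ_N` i.i.d. `Gamma(β/2, 1)`:
`P( (Σ_j Y_j γ_j) / ((β/2) Σ_j Y_j) ∉ (e^{-δ/2}, e^{δ/2}) ) ≤ C N⁻³`. -/
theorem gamma_weighted_Y_ratio_concentration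
    (β A δ : ℝ) (hβ : 0 < β) (hA : 0 < A) (hδ : 0 < δ) :
    ∃ C : ℝ,
      ∀ (N d : ℕ), 2 ≤ N → 1 ≤ d → d ≤ N - 1 →
      ∀ (lam : Fin N → ℝ), (∀ j, lam j ∈ Set.Icc (-A) A) →
      ∀ (z : ℝ), A + 1 < z →
      ∀ (Ω : Type) (_ : MeasurableSpace Ω) (P : Measure Ω), IsProbabilityMeasure P →
      ∀ (γ : Fin N → Ω → ℝ),
        (∀ j, Measurable (γ j)) →
        iIndepFun γ P →
        (∀ j, Measure.map (γ j) P = gammaMeasure (β / 2) 1) →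
        (P {ω | (∑ j, Yquant N d lam z j * γ j ω) / ((β / 2) * ∑ j, Yquant N d lam z j) ∉
            Set.Ioo (Real.exp (-δ / 2)) (Real.exp (δ / 2))}).toReal
          ≤ C * ((N : ℝ) ^ 3)⁻¹ :=
  gamma_weighted_Y_ratio_concentration_general β A δ hβ hδ
end

section
/- Let A > 0 and let μ and ν be Borel probability measures on ℝ whose supports are contained in [−A, A]. If ∫ log(z − λ) dμ(λ) = ∫ log(z − λ) dν(λ) for every real z > A + 1, then μ = ν. -/
/-!
Since `log (z - λ) = log z - ∑ (λ / z) ^ (n + 1) / (n + 1)` uniformly for `λ ∈ [-A, A]` and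
`z > A`, the potential `∫ log (z - λ) dμ(λ)` is `log z` minus the power series in `1 / z` whose
coefficients are the moments `∫ λ ^ (n + 1) dμ / (n + 1)`. Equal potentials on `(A + 1, ∞)` make
the difference of these power series vanish on `(0, 1 / (A + 1))`, so by the identity theorem all
moments of `μ` and `ν` agree. A measure on `[-A, A]` is determined by its moments because
polynomials are uniformly dense in `C([-A, A])`.
-/

open MeasureTheory Real Set Filter Topology Polynomial

section CompactlySupported

variable {X E : Type*} [MeasurableSpace X] [NormedAddCommGroup E]
  {μ : Measure X} [IsFiniteMeasure μ] {K : Set X}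

lemma integrable_of_continuousOn_of_ae_mem [TopologicalSpace X] [OpensMeasurableSpace X]
    [T2Space X] (hK : IsCompact K) (hμK : ∀ᵐ x ∂μ, x ∈ K) {g : X → E} (hg : ContinuousOn g K) :
    Integrable g μ := by
  rw [← Measure.restrict_eq_self_of_ae_mem hμK]
  exact hg.integrableOn_compact hK

lemma dist_integral_le_of_forall_mem [NormedSpace ℝ E] (hμK : ∀ᵐ x ∂μ, x ∈ K)
    {f g : X → E} (hf : Integrable f μ) (hg : Integrable g μ) {δ : ℝ}
    (hfg : ∀ x ∈ K, dist (f x) (g x) ≤ δ) :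
    dist (∫ x, f x ∂μ) (∫ x, g x ∂μ) ≤ δ * μ.real univ := by
  rw [dist_eq_norm, ← integral_sub hf hg]
  refine norm_integral_le_of_norm_le_const ?_
  filter_upwards [hμK] with x hx
  rw [← dist_eq_norm]
  exact hfg x hx

end CompactlySupported

lemma hasSum_pow_div_mul_inv_pow_of_abs_lt {z l : ℝ} (hl : |l| < z) :
    HasSum (fun n : ℕ => l ^ (n + 1) / (n + 1) * z⁻¹ ^ (n + 1)) (log z - log (z - l)) := by
  have hz : 0 < z := (abs_nonneg l).trans_lt hl
  have hlz : |l * z⁻¹| < 1 := by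
    rwa [abs_mul, abs_inv, abs_of_pos hz, ← div_eq_mul_inv, div_lt_one hz]
  have hzl : 0 < z - l := by linarith [le_abs_self l]
  convert hasSum_pow_div_log_of_abs_lt_one hlz using 1
  · ext n
    ring
  · have h1 : 1 - l * z⁻¹ = (z - l) * z⁻¹ := by field_simp
    rw [h1, log_mul hzl.ne' (inv_ne_zero hz.ne'), log_inv]
    ring

lemma hasSum_integral_pow_div_mul_inv_pow {μ : Measure ℝ} [IsProbabilityMeasure μ] {A z : ℝ}
    (hμ : ∀ᵐ l ∂μ, l ∈ Icc (-A) A) (hz : A < z) :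
    HasSum (fun n : ℕ => (∫ l, l ^ (n + 1) ∂μ) / (n + 1) * z⁻¹ ^ (n + 1))
      (log z - ∫ l, log (z - l) ∂μ) := by
  have hμA : ∀ᵐ l ∂μ, |l| ≤ A := by
    filter_upwards [hμ] with l hl using abs_le.2 hl
  have hlog_int : Integrable (fun l => log (z - l)) μ := by
    refine integrable_of_continuousOn_of_ae_mem isCompact_Icc hμ
      (ContinuousOn.log (by fun_prop) fun l hl => ?_)
    linarith [hl.2]
  have hterm (n : ℕ) : (∫ l, l ^ (n + 1) ∂μ) / (n + 1) * z⁻¹ ^ (n + 1)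
      = ∫ l, l ^ (n + 1) / (n + 1) * z⁻¹ ^ (n + 1) ∂μ := by
    rw [integral_mul_const, integral_div]
  have hlim : ∫ l, (log z - log (z - l)) ∂μ = log z - ∫ l, log (z - l) ∂μ := by
    rw [integral_sub (integrable_const _) hlog_int, integral_const, probReal_univ, one_smul]
  simp_rw [hterm, ← hlim]
  refine hasSum_integral_of_dominated_convergence (fun n _ => (A * z⁻¹) ^ (n + 1))
    (fun n => by fun_prop) (fun n => ?_) ?_ (integrable_const _) ?_
  · filter_upwards [hμA] with l hl
    have hz0 : 0 < z := ((abs_nonneg l).trans hl).trans_lt hz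
    have hn : (1 : ℝ) ≤ n + 1 := by linarith [n.cast_nonneg (α := ℝ)]
    calc ‖l ^ (n + 1) / (n + 1) * z⁻¹ ^ (n + 1)‖
        = |l| ^ (n + 1) / (n + 1) * z⁻¹ ^ (n + 1) := by
          rw [norm_mul, norm_div, norm_pow, norm_pow, norm_inv, Real.norm_of_nonneg hz0.le,
            Real.norm_of_nonneg (by positivity : (0 : ℝ) ≤ n + 1), Real.norm_eq_abs]
      _ ≤ A ^ (n + 1) * z⁻¹ ^ (n + 1) := by
          gcongr
          exact (div_le_self (by positivity) hn).trans (pow_le_pow_left₀ (abs_nonneg l) hl _)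
      _ = (A * z⁻¹) ^ (n + 1) := (mul_pow _ _ _).symm
  · filter_upwards [hμA] with l hl
    have hA : 0 ≤ A := (abs_nonneg l).trans hl
    have hz0 : 0 < z := hA.trans_lt hz
    refine (summable_nat_add_iff 1).2 (summable_geometric_of_lt_one (by positivity) ?_)
    rwa [← div_eq_mul_inv, div_lt_one hz0]
  · filter_upwards [hμA] with l hl using hasSum_pow_div_mul_inv_pow_of_abs_lt (hl.trans_lt hz)

lemma eq_zero_of_forall_hasSum_mul_pow_eq_zero {a : ℕ → ℝ} {ε : ℝ} (hε : 0 < ε)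
    (h : ∀ t ∈ Ioo 0 ε, HasSum (fun n => a n * t ^ n) 0) : a = 0 := by
  set p := FormalMultilinearSeries.ofScalars ℝ a
  have hradius : 0 < p.radius := by
    have hr : ε / 2 ∈ Ioo 0 ε := ⟨by positivity, by linarith⟩
    refine lt_of_lt_of_le ?_ (p.le_radius_of_tendsto (r := (ε / 2).toNNReal) (l := 0) ?_)
    · simpa using hε
    · simpa [p, FormalMultilinearSeries.ofScalars_norm, abs_of_pos hε, max_eq_left hr.1.le] using
        (h _ hr).summable.tendsto_atTop_zero.norm
  have hp := (p.hasFPowerSeriesOnBall hradius).hasFPowerSeriesAt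
  have hzero : ∀ᶠ t in 𝓝[>] 0, p.sum t = 0 := by
    filter_upwards [Ioo_mem_nhdsGT hε] with t ht
    rw [← FormalMultilinearSeries.ofScalarsSum, FormalMultilinearSeries.ofScalars_sum_eq]
    exact (h t ht).tsum_eq
  have hfreq : ∃ᶠ t in 𝓝[≠] 0, p.sum t = 0 :=
    (hzero.frequently).filter_mono (nhdsWithin_mono _ fun t ht => ne_of_gt ht)
  exact (FormalMultilinearSeries.ofScalars_series_eq_zero ℝ).1
    (hp.eq_zero_of_eventually (hp.analyticAt.frequently_zero_iff_eventually_zero.1 hfreq))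

lemma integral_pow_eq_of_integral_log_sub_eq {μ ν : Measure ℝ} [IsProbabilityMeasure μ]
    [IsProbabilityMeasure ν] {A : ℝ} (hA : 0 ≤ A) (hμ : ∀ᵐ l ∂μ, l ∈ Icc (-A) A)
    (hν : ∀ᵐ l ∂ν, l ∈ Icc (-A) A)
    (h : ∀ z, A + 1 < z → ∫ l, log (z - l) ∂μ = ∫ l, log (z - l) ∂ν) (n : ℕ) :
    ∫ l, l ^ n ∂μ = ∫ l, l ^ n ∂ν := by
  set a : ℕ → ℝ := fun n => ((∫ l, l ^ (n + 1) ∂μ) - ∫ l, l ^ (n + 1) ∂ν) / (n + 1)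
  have hA1 : 0 < A + 1 := by linarith
  have ha : a = 0 := by
    refine eq_zero_of_forall_hasSum_mul_pow_eq_zero (inv_pos.2 hA1) fun t ht => ?_
    have hz : A + 1 < t⁻¹ := (lt_inv_comm₀ ht.1 hA1).1 ht.2
    have hsum := (hasSum_integral_pow_div_mul_inv_pow hμ (by linarith : A < t⁻¹)).sub
      (hasSum_integral_pow_div_mul_inv_pow hν (by linarith : A < t⁻¹))
    rw [h _ hz, sub_self, inv_inv] at hsum
    have hdiv := hsum.div_const t
    rw [zero_div] at hdiv
    refine hdiv.congr_fun fun n => ?_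
    have ht0 : t ≠ 0 := ht.1.ne'
    simp only [a]
    field_simp
    ring
  cases n with
  | zero => simp
  | succ n =>
    have han := congr_fun ha n
    simp only [a, Pi.zero_apply, div_eq_zero_iff, sub_eq_zero] at han
    exact han.resolve_right n.cast_add_one_ne_zero

section Moments

variable {μ ν : Measure ℝ} [IsFiniteMeasure μ] [IsFiniteMeasure ν] {a b : ℝ}

lemma integrable_eval_of_ae_mem_Icc (hμ : ∀ᵐ x ∂μ, x ∈ Icc a b) (q : ℝ[X]) :
    Integrable (fun x => q.eval x) μ :=
  integrable_of_continuousOn_of_ae_mem isCompact_Icc hμ q.continuous.continuousOn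

lemma integral_eval_eq_of_integral_pow_eq (hμ : ∀ᵐ x ∂μ, x ∈ Icc a b)
    (hν : ∀ᵐ x ∂ν, x ∈ Icc a b) (h : ∀ n : ℕ, ∫ x, x ^ n ∂μ = ∫ x, x ^ n ∂ν) (q : ℝ[X]) :
    ∫ x, q.eval x ∂μ = ∫ x, q.eval x ∂ν := by
  induction q using Polynomial.induction_on' with
  | add p q hp hq =>
    simp only [eval_add]
    rw [integral_add (integrable_eval_of_ae_mem_Icc hμ p) (integrable_eval_of_ae_mem_Icc hμ q),
      integral_add (integrable_eval_of_ae_mem_Icc hν p) (integrable_eval_of_ae_mem_Icc hν q),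
      hp, hq]
  | monomial n c => simp only [eval_monomial, integral_const_mul, h]

lemma ext_of_integral_pow_eq (hμ : ∀ᵐ x ∂μ, x ∈ Icc a b) (hν : ∀ᵐ x ∂ν, x ∈ Icc a b)
    (h : ∀ n : ℕ, ∫ x, x ^ n ∂μ = ∫ x, x ^ n ∂ν) : μ = ν := by
  refine ext_of_forall_integral_eq_of_IsFiniteMeasure fun g =>
    eq_of_forall_dist_le fun ε hε => ?_
  set M := μ.real univ + ν.real univ + 1
  have hM : 0 < M := by positivity
  obtain ⟨q, hq⟩ := exists_polynomial_near_of_continuousOn a b g g.continuous.continuousOn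
    (ε / M) (div_pos hε hM)
  have hgq {ρ : Measure ℝ} [IsFiniteMeasure ρ] (hρ : ∀ᵐ x ∂ρ, x ∈ Icc a b) :
      dist (∫ x, g x ∂ρ) (∫ x, q.eval x ∂ρ) ≤ ε / M * ρ.real univ :=
    dist_integral_le_of_forall_mem hρ (g.integrable ρ) (integrable_eval_of_ae_mem_Icc hρ q)
      fun x hx => by rw [dist_comm, Real.dist_eq]; exact (hq x hx).le
  calc dist (∫ x, g x ∂μ) (∫ x, g x ∂ν)
      ≤ dist (∫ x, g x ∂μ) (∫ x, q.eval x ∂μ) + dist (∫ x, q.eval x ∂ν) (∫ x, g x ∂ν) := by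
        rw [integral_eval_eq_of_integral_pow_eq hμ hν h q]
        exact dist_triangle _ _ _
    _ ≤ ε / M * μ.real univ + ε / M * ν.real univ :=
        add_le_add (hgq hμ) (dist_comm (α := ℝ) _ _ ▸ hgq hν)
    _ ≤ ε := by
        rw [← mul_add, div_mul_eq_mul_div, div_le_iff₀ hM]
        gcongr
        linarith

end Moments

/-- Let `A > 0` and let `μ` and `ν` be Borel probability measures on `ℝ`
whose supports are contained in `[-A, A]`. If `∫ log (z - λ) dμ(λ) = ∫ log (z - λ) dν(λ)`
for every real `z > A + 1`, then `μ = ν`. -/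
theorem logPotential_eq_implies_measure_eq
    (A : ℝ) (hA : 0 < A) (μ ν : Measure ℝ)
    [IsProbabilityMeasure μ] [IsProbabilityMeasure ν]
    (hμsupp : μ (Set.Icc (-A) A)ᶜ = 0) (hνsupp : ν (Set.Icc (-A) A)ᶜ = 0)
    (h : ∀ z : ℝ, A + 1 < z →
      ∫ l, Real.log (z - l) ∂μ = ∫ l, Real.log (z - l) ∂ν) :
    μ = ν := by
  have hμ : ∀ᵐ l ∂μ, l ∈ Icc (-A) A := mem_ae_iff.2 hμsupp
  have hν : ∀ᵐ l ∂ν, l ∈ Icc (-A) A := mem_ae_iff.2 hνsupp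
  exact ext_of_integral_pow_eq hμ hν (integral_pow_eq_of_integral_log_sub_eq hA.le hμ hν h)
end

section
/- Let A > 0, let (μ_n)_{n ≥ 1} be a sequence of Borel probability measures on ℝ all supported in [−A, A], and let μ be a Borel probability measure supported in [−A, A]. If for every real z > A + 1 one has ∫ log(z − λ) dμ_n(λ) → ∫ log(z − λ) dμ(λ) as n → ∞, then μ_n converges weakly to μ. -/
open MeasureTheory Filter Set Topology

/-!
Since all measures are probability measures carried by `[-A, A]`, the class of test functions
`g` with `∫ g dμₙ → ∫ g dμ` is closed under uniform approximation on `[-A, A]`. Difference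
quotients in `z` of `log (z - λ)` approximate `(z - λ)⁻¹` uniformly, so the Stieltjes transforms
converge. The identity `λ ^ (k + 1) / (z - λ) = z λ ^ k / (z - λ) - λ ^ k`, together with
`z λ ^ k / (z - λ) → λ ^ k` uniformly as `z → ∞`, gives by induction the convergence of every
moment, hence of the integrals of polynomials, and Weierstrass approximation finishes the proof.
-/

section CompactSupport

variable {X ι : Type*} [MeasurableSpace X] {K : Set X} {l : Filter ι} {μs : ι → Measure X}
  {μ : Measure X}

theorem tendsto_integral_congr_of_eqOn (hμs : ∀ i, ∀ᵐ x ∂μs i, x ∈ K) (hμ : ∀ᵐ x ∂μ, x ∈ K)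
    {g h : X → ℝ} (hgh : EqOn g h K)
    (hh : Tendsto (fun i => ∫ x, h x ∂μs i) l (𝓝 (∫ x, h x ∂μ))) :
    Tendsto (fun i => ∫ x, g x ∂μs i) l (𝓝 (∫ x, g x ∂μ)) := by
  rw [integral_congr_ae (hμ.mono fun x hx => hgh hx)]
  exact hh.congr fun i => (integral_congr_ae ((hμs i).mono fun x hx => hgh hx)).symm

variable [TopologicalSpace X] [OpensMeasurableSpace X] [T2Space X]

theorem integrable_of_continuousOn_of_ae_mem_s16 {ν : Measure X} [IsFiniteMeasure ν]
    (hK : IsCompact K) (hν : ∀ᵐ x ∂ν, x ∈ K) {g : X → ℝ} (hg : ContinuousOn g K) :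
    Integrable g ν := by
  simpa [IntegrableOn, Measure.restrict_eq_self_of_ae_mem hν] using
    hg.integrableOn_compact (μ := ν) hK

theorem abs_integral_sub_integral_le {ν : Measure X} [IsProbabilityMeasure ν]
    (hK : IsCompact K) (hν : ∀ᵐ x ∂ν, x ∈ K) {g h : X → ℝ} (hg : ContinuousOn g K)
    (hh : ContinuousOn h K) {ε : ℝ} (hgh : ∀ x ∈ K, |g x - h x| ≤ ε) :
    |∫ x, g x ∂ν - ∫ x, h x ∂ν| ≤ ε := by
  rw [← integral_sub (integrable_of_continuousOn_of_ae_mem_s16 hK hν hg)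
    (integrable_of_continuousOn_of_ae_mem_s16 hK hν hh)]
  simpa using norm_integral_le_of_norm_le_const
    (hν.mono fun x hx => (Real.norm_eq_abs _).trans_le (hgh x hx))

theorem tendsto_integral_sub [∀ i, IsFiniteMeasure (μs i)] [IsFiniteMeasure μ]
    (hK : IsCompact K) (hμs : ∀ i, ∀ᵐ x ∂μs i, x ∈ K) (hμ : ∀ᵐ x ∂μ, x ∈ K) {g h : X → ℝ}
    (hg : ContinuousOn g K) (hh : ContinuousOn h K)
    (hgT : Tendsto (fun i => ∫ x, g x ∂μs i) l (𝓝 (∫ x, g x ∂μ)))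
    (hhT : Tendsto (fun i => ∫ x, h x ∂μs i) l (𝓝 (∫ x, h x ∂μ))) :
    Tendsto (fun i => ∫ x, g x - h x ∂μs i) l (𝓝 (∫ x, g x - h x ∂μ)) := by
  have hsub : ∀ (ν : Measure X) [IsFiniteMeasure ν], (∀ᵐ x ∂ν, x ∈ K) →
      ∫ x, g x - h x ∂ν = ∫ x, g x ∂ν - ∫ x, h x ∂ν := fun ν _ hν =>
    integral_sub (integrable_of_continuousOn_of_ae_mem_s16 hK hν hg)
      (integrable_of_continuousOn_of_ae_mem_s16 hK hν hh)
  rw [hsub μ hμ]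
  exact (hgT.sub hhT).congr fun i => (hsub (μs i) (hμs i)).symm

variable [∀ i, IsProbabilityMeasure (μs i)] [IsProbabilityMeasure μ]

theorem tendsto_integral_of_forall_approx (hK : IsCompact K) (hμs : ∀ i, ∀ᵐ x ∂μs i, x ∈ K)
    (hμ : ∀ᵐ x ∂μ, x ∈ K) {g : X → ℝ} (hg : ContinuousOn g K)
    (happrox : ∀ ε > 0, ∃ h : X → ℝ, ContinuousOn h K ∧ (∀ x ∈ K, |g x - h x| ≤ ε) ∧
      Tendsto (fun i => ∫ x, h x ∂μs i) l (𝓝 (∫ x, h x ∂μ))) :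
    Tendsto (fun i => ∫ x, g x ∂μs i) l (𝓝 (∫ x, g x ∂μ)) := by
  rw [Metric.tendsto_nhds]
  intro ε hε
  obtain ⟨h, hh, hgh, hhT⟩ := happrox (ε / 3) (by positivity)
  have hμ' := abs_integral_sub_integral_le hK hμ hg hh hgh
  filter_upwards [Metric.tendsto_nhds.1 hhT (ε / 3) (by positivity)] with i hi
  have hμi := abs_integral_sub_integral_le hK (hμs i) hg hh hgh
  rw [Real.dist_eq] at hi ⊢
  rw [abs_le] at hμ' hμi
  rw [abs_lt] at hi ⊢
  constructor <;> linarith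

end CompactSupport

theorem abs_inv_sub_inv_mul_log_sub_log_le {t δ : ℝ} (hδ : 0 < δ) (ht : 1 ≤ t - δ) :
    |t⁻¹ - δ⁻¹ * (Real.log t - Real.log (t - δ))| ≤ δ := by
  set s := t - δ
  have hs : 0 < s := by linarith
  have ht0 : 0 < t := by linarith
  have hlower : t⁻¹ ≤ δ⁻¹ * (Real.log t - Real.log s) := by
    have := Real.one_sub_inv_le_log_of_pos (div_pos ht0 hs)
    rw [Real.log_div ht0.ne' hs.ne', inv_div, one_sub_div ht0.ne'] at this
    rw [le_inv_mul_iff₀ hδ]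
    simpa [s, div_eq_mul_inv] using this
  have hupper : δ⁻¹ * (Real.log t - Real.log s) ≤ s⁻¹ := by
    have := Real.log_le_sub_one_of_pos (div_pos ht0 hs)
    rw [Real.log_div ht0.ne' hs.ne', div_sub_one hs.ne'] at this
    rw [inv_mul_le_iff₀ hδ]
    simpa [s, div_eq_mul_inv] using this
  have hgap : s⁻¹ - t⁻¹ ≤ δ := by
    have hst : 1 ≤ s * t := one_le_mul_of_one_le_of_one_le ht (by linarith)
    rw [inv_sub_inv hs.ne' ht0.ne', div_le_iff₀ (by positivity), sub_sub_cancel]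
    nlinarith
  rw [abs_le]
  constructor <;> linarith

theorem abs_pow_mul_inv_sub_le {A z x : ℝ} (k : ℕ) (hz : A < z) (hx : x ∈ Icc (-A) A) :
    |x ^ k * (z - x)⁻¹| ≤ A ^ k / (z - A) := by
  have hxA : |x| ≤ A := abs_le.2 hx
  rw [abs_mul, abs_pow, abs_inv, abs_of_pos (by linarith [hx.2] : 0 < z - x), ← div_eq_mul_inv]
  exact div_le_div₀ (pow_nonneg ((abs_nonneg x).trans hxA) k)
    (pow_le_pow_left₀ (abs_nonneg x) hxA k) (by linarith) (by linarith [hx.2])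

section LogPotential

variable {ι : Type*} {l : Filter ι} {μs : ι → Measure ℝ} {μ : Measure ℝ}
  [∀ i, IsProbabilityMeasure (μs i)] [IsProbabilityMeasure μ] {A : ℝ}

theorem tendsto_integral_inv_sub (hμs : ∀ i, ∀ᵐ x ∂μs i, x ∈ Icc (-A) A)
    (hμ : ∀ᵐ x ∂μ, x ∈ Icc (-A) A)
    (hlog : ∀ z : ℝ, A + 1 < z →
      Tendsto (fun i => ∫ x, Real.log (z - x) ∂μs i) l (𝓝 (∫ x, Real.log (z - x) ∂μ)))
    {z : ℝ} (hz : A + 1 < z) :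
    Tendsto (fun i => ∫ x, (z - x)⁻¹ ∂μs i) l (𝓝 (∫ x, (z - x)⁻¹ ∂μ)) := by
  have hcont : ∀ w, A < w → ContinuousOn (fun x : ℝ => Real.log (w - x)) (Icc (-A) A) :=
    fun w hw => by fun_prop (disch := intro x hx; linarith [hx.2])
  refine tendsto_integral_of_forall_approx isCompact_Icc hμs hμ
    (by fun_prop (disch := intro x hx; linarith [hx.2])) fun ε hε => ?_
  set δ := min ε ((z - A - 1) / 2)
  have hδ : 0 < δ := lt_min hε (by linarith)
  have hδz : δ ≤ (z - A - 1) / 2 := min_le_right _ _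
  refine ⟨fun x => δ⁻¹ * (Real.log (z - x) - Real.log (z - δ - x)),
    ((hcont z (by linarith)).sub (hcont (z - δ) (by linarith))).const_smul δ⁻¹,
    fun x hx => ?_, ?_⟩
  · beta_reduce
    rw [sub_right_comm z δ x]
    exact (abs_inv_sub_inv_mul_log_sub_log_le hδ (by linarith [hx.2])).trans (min_le_left _ _)
  · simp only [integral_const_mul]
    exact (tendsto_integral_sub isCompact_Icc hμs hμ (hcont z (by linarith))
      (hcont (z - δ) (by linarith)) (hlog z hz) (hlog (z - δ) (by linarith))).const_mul _

theorem tendsto_integral_pow_of_tendsto_integral_pow_mul_inv_sub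
    (hμs : ∀ i, ∀ᵐ x ∂μs i, x ∈ Icc (-A) A) (hμ : ∀ᵐ x ∂μ, x ∈ Icc (-A) A) (k : ℕ)
    (hres : ∀ z : ℝ, A + 1 < z → Tendsto (fun i => ∫ x, x ^ k * (z - x)⁻¹ ∂μs i) l
      (𝓝 (∫ x, x ^ k * (z - x)⁻¹ ∂μ))) :
    Tendsto (fun i => ∫ x, x ^ k ∂μs i) l (𝓝 (∫ x, x ^ k ∂μ)) := by
  refine tendsto_integral_of_forall_approx isCompact_Icc hμs hμ (by fun_prop)
    fun ε hε => ?_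
  have hdecay : Tendsto (fun z : ℝ => A ^ (k + 1) / (z - A)) atTop (𝓝 0) :=
    tendsto_const_nhds.div_atTop (tendsto_atTop_add_const_right atTop (-A) tendsto_id)
  obtain ⟨z, hzε, hz⟩ :=
    ((hdecay.eventually (ge_mem_nhds hε)).and (eventually_gt_atTop (A + 1))).exists
  refine ⟨fun x => z * (x ^ k * (z - x)⁻¹),
    (by fun_prop (disch := intro x hx; linarith [hx.2])), fun x hx => ?_,
    by simpa only [integral_const_mul] using (hres z hz).const_mul z⟩
  have hzx : z - x ≠ 0 := by linarith [hx.2]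
  have hrem : x ^ k - z * (x ^ k * (z - x)⁻¹) = -(x ^ (k + 1) * (z - x)⁻¹) := by
    field_simp; ring
  rw [hrem, abs_neg]
  exact (abs_pow_mul_inv_sub_le (k + 1) (by linarith) hx).trans hzε

theorem tendsto_integral_pow_mul_inv_sub (hμs : ∀ i, ∀ᵐ x ∂μs i, x ∈ Icc (-A) A)
    (hμ : ∀ᵐ x ∂μ, x ∈ Icc (-A) A)
    (hlog : ∀ z : ℝ, A + 1 < z →
      Tendsto (fun i => ∫ x, Real.log (z - x) ∂μs i) l (𝓝 (∫ x, Real.log (z - x) ∂μ)))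
    (k : ℕ) {z : ℝ} (hz : A + 1 < z) :
    Tendsto (fun i => ∫ x, x ^ k * (z - x)⁻¹ ∂μs i) l (𝓝 (∫ x, x ^ k * (z - x)⁻¹ ∂μ)) := by
  induction k generalizing z with
  | zero => simpa only [pow_zero, one_mul] using tendsto_integral_inv_sub hμs hμ hlog hz
  | succ k ih =>
    have hmoment := tendsto_integral_pow_of_tendsto_integral_pow_mul_inv_sub hμs hμ k
      fun w hw => ih hw
    have hshift : EqOn (fun x => x ^ (k + 1) * (z - x)⁻¹)
        (fun x => z * (x ^ k * (z - x)⁻¹) - x ^ k) (Icc (-A) A) := fun x hx => by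
      have hzx : z - x ≠ 0 := by linarith [hx.2]
      field_simp
      ring
    refine tendsto_integral_congr_of_eqOn hμs hμ hshift
      (tendsto_integral_sub isCompact_Icc hμs hμ
        (by fun_prop (disch := intro x hx; linarith [hx.2])) (by fun_prop) ?_ hmoment)
    simpa only [integral_const_mul] using (ih hz).const_mul z

theorem tendsto_integral_eval (hμs : ∀ i, ∀ᵐ x ∂μs i, x ∈ Icc (-A) A)
    (hμ : ∀ᵐ x ∂μ, x ∈ Icc (-A) A)
    (hlog : ∀ z : ℝ, A + 1 < z →
      Tendsto (fun i => ∫ x, Real.log (z - x) ∂μs i) l (𝓝 (∫ x, Real.log (z - x) ∂μ)))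
    (p : Polynomial ℝ) :
    Tendsto (fun i => ∫ x, p.eval x ∂μs i) l (𝓝 (∫ x, p.eval x ∂μ)) := by
  have hexpand : ∀ (ν : Measure ℝ) [IsFiniteMeasure ν], (∀ᵐ x ∂ν, x ∈ Icc (-A) A) →
      ∫ x, p.eval x ∂ν = ∑ k ∈ Finset.range (p.natDegree + 1), p.coeff k * ∫ x, x ^ k ∂ν :=
    fun ν _ hν => by
      simp_rw [Polynomial.eval_eq_sum_range, ← integral_const_mul]
      exact integral_finsetSum _ fun k _ =>
        integrable_of_continuousOn_of_ae_mem_s16 isCompact_Icc hν (by fun_prop)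
  rw [hexpand μ hμ]
  refine (tendsto_finsetSum _ fun k _ => Tendsto.const_mul _ ?_).congr
    fun i => (hexpand (μs i) (hμs i)).symm
  exact tendsto_integral_pow_of_tendsto_integral_pow_mul_inv_sub hμs hμ k
    fun z hz => tendsto_integral_pow_mul_inv_sub hμs hμ hlog k hz

end LogPotential

theorem logPotential_tendsto_implies_weak_convergence_general
    (A : ℝ) (μs : ℕ → Measure ℝ) (μ : Measure ℝ)
    [∀ n, IsProbabilityMeasure (μs n)] [IsProbabilityMeasure μ]
    (hsupp : ∀ n, μs n (Set.Icc (-A) A)ᶜ = 0) (hsupp' : μ (Set.Icc (-A) A)ᶜ = 0)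
    (h : ∀ z : ℝ, A + 1 < z →
      Tendsto (fun n => ∫ l, Real.log (z - l) ∂(μs n)) atTop
        (nhds (∫ l, Real.log (z - l) ∂μ))) :
    ∀ f : BoundedContinuousFunction ℝ ℝ,
      Tendsto (fun n => ∫ x, f x ∂(μs n)) atTop (nhds (∫ x, f x ∂μ)) := by
  intro f
  have hf : ContinuousOn f (Icc (-A) A) := f.continuous.continuousOn
  -- `μ Kᶜ = 0` is, by definition of `ae`, the statement `∀ᵐ x ∂μ, x ∈ K`.
  refine tendsto_integral_of_forall_approx isCompact_Icc hsupp hsupp' hf fun ε hε => ?_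
  obtain ⟨p, hp⟩ := exists_polynomial_near_of_continuousOn (-A) A f hf ε hε
  exact ⟨fun x => p.eval x, p.continuous.continuousOn,
    fun x hx => (abs_sub_comm (f x) _ ▸ hp x hx).le, tendsto_integral_eval hsupp hsupp' h p⟩

/-- Let `A > 0`, let `(μ_n)` be Borel probability measures on `ℝ` all
supported in `[-A, A]`, and let `μ` be a Borel probability measure supported in `[-A, A]`.
If for every real `z > A + 1` one has `∫ log (z - λ) dμ_n(λ) → ∫ log (z - λ) dμ(λ)` as
`n → ∞`, then `μ_n` converges weakly to `μ`, i.e. `∫ f dμ_n → ∫ f dμ` for every bounded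
continuous `f : ℝ → ℝ`. -/
theorem logPotential_tendsto_implies_weak_convergence
    (A : ℝ) (hA : 0 < A) (μs : ℕ → Measure ℝ) (μ : Measure ℝ)
    [∀ n, IsProbabilityMeasure (μs n)] [IsProbabilityMeasure μ]
    (hsupp : ∀ n, μs n (Set.Icc (-A) A)ᶜ = 0) (hsupp' : μ (Set.Icc (-A) A)ᶜ = 0)
    (h : ∀ z : ℝ, A + 1 < z →
      Tendsto (fun n => ∫ l, Real.log (z - l) ∂(μs n)) atTop
        (nhds (∫ l, Real.log (z - l) ∂μ))) :
    ∀ f : BoundedContinuousFunction ℝ ℝ,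
      Tendsto (fun n => ∫ x, f x ∂(μs n)) atTop (nhds (∫ x, f x ∂μ)) :=
  logPotential_tendsto_implies_weak_convergence_general A μs μ hsupp hsupp' h
end
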